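/- arXiv:1701.05855 — 4 statements merged into one kernel-verified Lean document; each statement's English description precedes it below -/
import Mathlib

section
/- Let c > 0 be a constant and let G be a multi-hypergraph on vertex set V with m edges such that every vertex has degree less than cm. If A and B are disjoint subsets of V with d(A) ≥ 2cm and d(A) + 2·d(B) ≥ 3cm, then there is a partition of A ∪ B into two parts, each of which meets at least cm edges. -/
/-!
Write `d = edgesMeeting G` and `t = c * m`. Counting edges that meet a set is monotone and
submodular, so `T ↦ d (T ∪ B) - d B` is subadditive. If `d B ≥ t`, split as `(A, B)`. Otherwise
take `S ⊆ A` minimal with `d (S ∪ B) ≥ t`. If `d (A \ S) ≥ t`, split as `(S ∪ B, A \ S)`.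
If not, `d S > t` because `d A ≥ 2t`, so `S` is no singleton and, by minimality, both
`S.erase v ∪ B` and `{v} ∪ B` meet fewer than `t` edges; subadditivity then gives
`d ((A \ S) ∪ B) > d A + 2 d B - 2t ≥ t`, and `(S, (A \ S) ∪ B)` works.
-/

open Finset

/-- The number of edges of the multi-hypergraph `G` (a multiset of finite edges,
counted with multiplicity) that meet the vertex set `A`. -/
def edgesMeeting {V : Type*} [DecidableEq V] (G : Multiset (Finset V)) (A : Finset V) : ℕ :=
  Multiset.card (G.filter fun e => (A ∩ e).Nonempty)

section EdgesMeeting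

variable {V : Type*} [DecidableEq V] (G : Multiset (Finset V))

lemma edgesMeeting_cons (e A : Finset V) :
    edgesMeeting (e ::ₘ G) A = edgesMeeting G A + if (A ∩ e).Nonempty then 1 else 0 := by
  unfold edgesMeeting
  split_ifs with h <;> simp [h]

lemma edgesMeeting_mono {X Y : Finset V} (h : X ⊆ Y) : edgesMeeting G X ≤ edgesMeeting G Y :=
  Multiset.card_le_card <| Multiset.monotone_filter_right _ fun _ he =>
    he.mono (inter_subset_inter_right h)

lemma edgesMeeting_union_add_inter_le (X Y : Finset V) :
    edgesMeeting G (X ∪ Y) + edgesMeeting G (X ∩ Y) ≤ edgesMeeting G X + edgesMeeting G Y := by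
  induction G using Multiset.induction_on with
  | empty => simp [edgesMeeting]
  | cons e G ih =>
    simp only [edgesMeeting_cons]
    have hunion : ((X ∪ Y) ∩ e).Nonempty ↔ (X ∩ e).Nonempty ∨ (Y ∩ e).Nonempty := by
      rw [union_inter_distrib_right, union_nonempty]
    have hinterX : ((X ∩ Y) ∩ e).Nonempty → (X ∩ e).Nonempty :=
      Finset.Nonempty.mono (inter_subset_inter_right inter_subset_left)
    have hinterY : ((X ∩ Y) ∩ e).Nonempty → (Y ∩ e).Nonempty :=
      Finset.Nonempty.mono (inter_subset_inter_right inter_subset_right)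
    split_ifs <;> simp_all <;> omega

lemma edgesMeeting_union_le (X Y : Finset V) :
    edgesMeeting G (X ∪ Y) ≤ edgesMeeting G X + edgesMeeting G Y :=
  (Nat.le_add_right _ _).trans (edgesMeeting_union_add_inter_le G X Y)

lemma edgesMeeting_union_union_add_le (B X Y : Finset V) :
    edgesMeeting G (X ∪ Y ∪ B) + edgesMeeting G B ≤
      edgesMeeting G (X ∪ B) + edgesMeeting G (Y ∪ B) := by
  have hunion : X ∪ B ∪ (Y ∪ B) = X ∪ Y ∪ B := by
    rw [union_union_union_comm, union_self]
  have hB : B ⊆ (X ∪ B) ∩ (Y ∪ B) := subset_inter subset_union_right subset_union_right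
  calc edgesMeeting G (X ∪ Y ∪ B) + edgesMeeting G B
      ≤ edgesMeeting G (X ∪ B ∪ (Y ∪ B)) + edgesMeeting G ((X ∪ B) ∩ (Y ∪ B)) := by
        rw [hunion]; exact Nat.add_le_add_left (edgesMeeting_mono G hB) _
    _ ≤ edgesMeeting G (X ∪ B) + edgesMeeting G (Y ∪ B) :=
        edgesMeeting_union_add_inter_le G _ _

variable {G} {t : ℝ} {A B : Finset V}

theorem lt_edgesMeeting_sdiff_union_of_minimal {S : Finset V}
    (hdeg : ∀ v ∈ A, (edgesMeeting G {v} : ℝ) < t)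
    (hAB : 3 * t ≤ (edgesMeeting G A : ℝ) + 2 * edgesMeeting G B)
    (hB : (edgesMeeting G B : ℝ) < t) (hSA : S ⊆ A)
    (hS : Minimal (fun T => t ≤ edgesMeeting G (T ∪ B)) S) (hdS : t < edgesMeeting G S) :
    t < edgesMeeting G (A \ S ∪ B) := by
  obtain ⟨v, hv⟩ : S.Nonempty := by
    rw [nonempty_iff_ne_empty]
    rintro rfl
    exact hB.not_ge (by simpa using hS.prop)
  have hv_ne : {v} ≠ S := by
    rintro rfl
    exact (hdeg v (hSA hv)).not_gt hdS
  have herase : (edgesMeeting G (S.erase v ∪ B) : ℝ) < t :=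
    not_le.1 <| hS.not_prop_of_lt (erase_ssubset hv)
  have hsingle : (edgesMeeting G ({v} ∪ B) : ℝ) < t :=
    not_le.1 <| hS.not_prop_of_lt <|
      Finset.ssubset_iff_subset_ne.2 ⟨singleton_subset_iff.2 hv, hv_ne⟩
  have hS_le : (edgesMeeting G (S ∪ B) : ℝ) + edgesMeeting G B ≤
      edgesMeeting G (S.erase v ∪ B) + edgesMeeting G ({v} ∪ B) := by
    have := edgesMeeting_union_union_add_le G B (S.erase v) {v}
    rw [erase_union_eq v S hv] at this
    exact_mod_cast this
  have hA_le : (edgesMeeting G (A ∪ B) : ℝ) + edgesMeeting G B ≤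
      edgesMeeting G (A \ S ∪ B) + edgesMeeting G (S ∪ B) := by
    have := edgesMeeting_union_union_add_le G B (A \ S) S
    rw [sdiff_union_of_subset hSA] at this
    exact_mod_cast this
  have hA_le_union : (edgesMeeting G A : ℝ) ≤ edgesMeeting G (A ∪ B) := by
    exact_mod_cast edgesMeeting_mono G subset_union_left
  linarith

theorem exists_subset_le_edgesMeeting_union_and_sdiff
    (hdeg : ∀ v ∈ A, (edgesMeeting G {v} : ℝ) < t)
    (hA : 2 * t ≤ edgesMeeting G A)
    (hAB : 3 * t ≤ (edgesMeeting G A : ℝ) + 2 * edgesMeeting G B) :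
    ∃ T ⊆ A, t ≤ edgesMeeting G (T ∪ B) ∧ t ≤ edgesMeeting G (A \ T) := by
  by_cases hB : t ≤ edgesMeeting G B
  · refine ⟨∅, empty_subset A, by simpa using hB, ?_⟩
    have : (0 : ℝ) ≤ edgesMeeting G A := Nat.cast_nonneg _
    rw [sdiff_empty]
    linarith
  have hA_le_union : (edgesMeeting G A : ℝ) ≤ edgesMeeting G (A ∪ B) := by
    exact_mod_cast edgesMeeting_mono G subset_union_left
  obtain ⟨S, hSA, hS⟩ := exists_minimal_le_of_wellFoundedLT
    (fun T => t ≤ edgesMeeting G (T ∪ B)) A (by linarith)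
  by_cases hAS : t ≤ edgesMeeting G (A \ S)
  · exact ⟨S, hSA, hS.prop, hAS⟩
  have hdS : t < edgesMeeting G S := by
    have : (edgesMeeting G A : ℝ) ≤ edgesMeeting G S + edgesMeeting G (A \ S) := by
      have := edgesMeeting_union_le G S (A \ S)
      rw [union_sdiff_of_subset hSA] at this
      exact_mod_cast this
    linarith
  refine ⟨A \ S, sdiff_subset, ?_, ?_⟩
  · exact (lt_edgesMeeting_sdiff_union_of_minimal hdeg hAB (not_le.1 hB) hSA hS hdS).le
  · rw [Finset.sdiff_sdiff_eq_self hSA]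
    exact hdS.le

end EdgesMeeting

theorem statement2_general {V : Type*} [DecidableEq V] (c : ℝ)
    (G : Multiset (Finset V))
    (m : ℕ)
    (hdeg : ∀ v : V, (edgesMeeting G {v} : ℝ) < c * m)
    (A B : Finset V) (hAB : Disjoint A B)
    (hA : 2 * c * m ≤ (edgesMeeting G A : ℝ))
    (hAB2 : 3 * c * m ≤ (edgesMeeting G A : ℝ) + 2 * (edgesMeeting G B : ℝ)) :
    ∃ P₁ P₂ : Finset V,
      P₁ ∪ P₂ = A ∪ B ∧ Disjoint P₁ P₂ ∧
      c * m ≤ (edgesMeeting G P₁ : ℝ) ∧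
      c * m ≤ (edgesMeeting G P₂ : ℝ) := by
  obtain ⟨T, hTA, hT, hAT⟩ := exists_subset_le_edgesMeeting_union_and_sdiff (A := A) (B := B)
    (fun v _ => hdeg v) (by linarith) (by linarith)
  refine ⟨T ∪ B, A \ T, ?_, ?_, hT, hAT⟩
  · rw [union_right_comm, union_sdiff_of_subset hTA]
  · exact disjoint_union_left.2 ⟨disjoint_sdiff, hAB.symm.mono_right sdiff_subset⟩

/-- If every vertex has degree less than `c * m` and `A`, `B` are disjoint sets with
`d(A) ≥ 2cm` and `d(A) + 2 d(B) ≥ 3cm`, then `A ∪ B` can be partitioned into two parts,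
each meeting at least `c * m` edges. -/
theorem statement2 {V : Type*} [DecidableEq V] (c : ℝ) (hc : 0 < c)
    (G : Multiset (Finset V)) (hGne : ∀ e ∈ G, e.Nonempty)
    (m : ℕ) (hm : Multiset.card G = m)
    (hdeg : ∀ v : V, (edgesMeeting G {v} : ℝ) < c * m)
    (A B : Finset V) (hAB : Disjoint A B)
    (hA : 2 * c * m ≤ (edgesMeeting G A : ℝ))
    (hAB2 : 3 * c * m ≤ (edgesMeeting G A : ℝ) + 2 * (edgesMeeting G B : ℝ)) :
    ∃ P₁ P₂ : Finset V,
      P₁ ∪ P₂ = A ∪ B ∧ Disjoint P₁ P₂ ∧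
      c * m ≤ (edgesMeeting G P₁ : ℝ) ∧
      c * m ≤ (edgesMeeting G P₂ : ℝ) :=
  statement2_general c G m hdeg A B hAB hA hAB2
end

section
/- Let G be an r-uniform multi-hypergraph on vertex set V with m edges, and let V₁, V₂, …, V_r be a partition of V for which Σᵢ d(Vᵢ) is as large as possible, ordered such that d(V₁) ≥ d(V₂) ≥ ⋯ ≥ d(V_r). Let c > 0 be a constant with d(V_{r−1}) ≥ cm. Then either there exists a partition W₁, W₂, …, W_r of V with Wᵢ ⊆ Vᵢ for 1 ≤ i ≤ r−1 (and so W_r ⊇ V_r) such that each part meets at least cm edges, or there exists a partition W₁, W₂, …, W_r of V, again with Wᵢ ⊆ Vᵢ for 1 ≤ i ≤ r−1, such that for each i ≠ r one has d(Wᵢ) ≥ cm but d(Wᵢ \ {w}) < cm for every w ∈ Wᵢ, and moreover Σ_{i=1}^{r−1} d(Wᵢ) > (r+1)(m − cm). -/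
open Finset

section

variable {α ι : Type*}

namespace Multiset

lemma countP_le_countP_of_imp {s : Multiset α} {p q : α → Prop} [DecidablePred p]
    [DecidablePred q] (h : ∀ a, p a → q a) : s.countP p ≤ s.countP q := by
  simp only [countP_eq_card_filter]
  exact card_le_card (monotone_filter_right s h)

lemma countP_eq_add_of_iff {s : Multiset α} {p q r : α → Prop} [DecidablePred p]
    [DecidablePred q] [DecidablePred r] (h : ∀ a, p a ↔ q a ∨ r a) (hqr : ∀ a, q a → ¬ r a) :
    s.countP p = s.countP q + s.countP r := by
  induction s using Multiset.induction with
  | empty => simp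
  | cons a s ih =>
    simp only [countP_cons, ih]
    have := hqr a
    split_ifs <;> grind [h a]

lemma sum_countP_eq_sum_map_card_filter (s : Multiset α) (I : Finset ι) (p : ι → α → Prop)
    [∀ i, DecidablePred (p i)] :
    ∑ i ∈ I, s.countP (p i) = (s.map fun a => #{i ∈ I | p i a}).sum := by
  induction s using Multiset.induction with
  | empty => simp
  | cons a s ih =>
    simp only [countP_cons, sum_add_distrib, ih, sum_boole, map_cons, sum_cons, Nat.cast_id]
    exact add_comm _ _

end Multiset

lemma Finset.exists_subset_minimal [DecidableEq α] (p : Finset α → Prop) {A : Finset α}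
    (hA : p A) :
    ∃ S ⊆ A, p S ∧ ∀ w ∈ S, ¬ p (S \ {w}) := by
  obtain ⟨S, hSA, hS⟩ := exists_minimal_le_of_wellFoundedLT p A hA
  refine ⟨S, hSA, hS.prop, fun w hw => hS.not_prop_of_lt ?_⟩
  rw [sdiff_singleton_eq_erase]
  exact erase_ssubset hw

end

section

variable {V ι : Type*} [DecidableEq V] (G : Multiset (Finset V))

lemma edgesMeeting_eq_countP (A : Finset V) :
    edgesMeeting G A = G.countP fun e => ¬ Disjoint A e := by
  simp [edgesMeeting, Multiset.countP_eq_card_filter, not_disjoint_iff_nonempty_inter]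

lemma countP_disjoint_add_edgesMeeting (A : Finset V) :
    G.countP (Disjoint A) + edgesMeeting G A = Multiset.card G := by
  rw [edgesMeeting_eq_countP, Multiset.card_eq_countP_add_countP (Disjoint A)]

lemma edgesMeeting_insert (A : Finset V) (w : V) :
    edgesMeeting G (insert w A) = edgesMeeting G A + G.countP fun e => w ∈ e ∧ Disjoint A e := by
  simp only [edgesMeeting_eq_countP]
  exact Multiset.countP_eq_add_of_iff (fun e => by rw [disjoint_insert_left]; tauto)
    (fun e h h' => h h'.2)

lemma edgesMeeting_eq_edgesMeeting_erase_add {A : Finset V} {w : V} (hw : w ∈ A) :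
    edgesMeeting G A =
      edgesMeeting G (A.erase w) + G.countP fun e => w ∈ e ∧ Disjoint (A.erase w) e := by
  conv_lhs => rw [← insert_erase hw]
  exact edgesMeeting_insert G _ w

lemma edgesMeeting_eq_countP_card_inter_eq_one_add (A : Finset V) :
    edgesMeeting G A =
      G.countP (fun e => #(A ∩ e) = 1) + G.countP (fun e => 2 ≤ #(A ∩ e)) := by
  rw [edgesMeeting_eq_countP]
  refine Multiset.countP_eq_add_of_iff (fun e => ?_) (fun e h h' => by omega)
  rw [not_disjoint_iff_nonempty_inter, ← card_pos]
  omega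

lemma sum_countP_inter_eq_singleton (A : Finset V) :
    ∑ w ∈ A, G.countP (fun e => A ∩ e = {w}) = G.countP (fun e => #(A ∩ e) = 1) := by
  induction G using Multiset.induction with
  | empty => simp
  | cons e G ih =>
    simp only [Multiset.countP_cons, sum_add_distrib, ih, sum_boole, Nat.cast_id]
    congr 1
    split_ifs with h
    · obtain ⟨a, ha⟩ := card_eq_one.1 h
      have haA : a ∈ A := (mem_inter.1 (ha ▸ mem_singleton_self a)).1
      rw [card_eq_one]
      exact ⟨a, by ext w; grind⟩
    · rw [card_eq_zero, filter_eq_empty_iff]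
      intro w _ hw
      simp [hw] at h

section Partition

variable {G} [DecidableEq ι] {P : ι → Finset V}

def moveVertex (P : ι → Finset V) (w : V) (k : ι) : ι → Finset V :=
  fun j => if j = k then insert w (P j) else (P j).erase w

lemma moveVertex_isPartition (hP : ∀ v, ∃! i, v ∈ P i) (w : V) (k : ι) :
    ∀ v, ∃! i, v ∈ moveVertex P w k i := by
  intro v
  by_cases hvw : v = w
  · refine ⟨k, by simp [moveVertex, hvw], fun j hj => ?_⟩
    by_contra hjk
    simp [moveVertex, hjk, hvw] at hj
  · have hmem : ∀ j, v ∈ moveVertex P w k j ↔ v ∈ P j := fun j => by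
      unfold moveVertex; split_ifs <;> simp [hvw]
    simpa only [hmem] using hP v

lemma countP_mem_disjoint_le_of_maximal [Fintype ι] (hP : ∀ v, ∃! i, v ∈ P i)
    (hmax : ∀ Q : ι → Finset V, (∀ v, ∃! i, v ∈ Q i) →
      ∑ i, edgesMeeting G (Q i) ≤ ∑ i, edgesMeeting G (P i))
    {i k : ι} (hik : i ≠ k) {w : V} (hw : w ∈ P i) :
    G.countP (fun e => w ∈ e ∧ Disjoint (P k) e) ≤
      G.countP (fun e => w ∈ e ∧ Disjoint ((P i).erase w) e) := by
  have hmove : ∀ j, edgesMeeting G (moveVertex P w k j) +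
      (if j = i then G.countP fun e => w ∈ e ∧ Disjoint ((P i).erase w) e else 0) =
      edgesMeeting G (P j) + (if j = k then G.countP fun e => w ∈ e ∧ Disjoint (P k) e else 0) := by
    intro j
    by_cases hjk : j = k
    · subst hjk
      simp [moveVertex, Ne.symm hik, edgesMeeting_insert]
    by_cases hji : j = i
    · subst hji
      simp [moveVertex, hjk, ← edgesMeeting_eq_edgesMeeting_erase_add G hw]
    · have hwj : w ∉ P j := fun h => hji ((hP w).unique h hw)
      simp [moveVertex, hjk, hji, erase_eq_of_notMem hwj]
  have := Finset.sum_congr rfl fun j (_ : j ∈ univ) => hmove j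
  simp only [sum_add_distrib, sum_ite_eq', mem_univ, if_true] at this
  have := hmax _ (moveVertex_isPartition hP w k)
  omega

lemma countP_mem_disjoint_le_countP_inter_eq_singleton [Fintype ι]
    (hP : ∀ v, ∃! i, v ∈ P i)
    (hmax : ∀ Q : ι → Finset V, (∀ v, ∃! i, v ∈ Q i) →
      ∑ i, edgesMeeting G (Q i) ≤ ∑ i, edgesMeeting G (P i))
    {i k : ι} (hik : i ≠ k) {T U : Finset V} (hT : T ⊆ P i) (hU : P k ⊆ U) {w : V} (hw : w ∈ T) :
    G.countP (fun e => w ∈ e ∧ Disjoint U e) ≤ G.countP (fun e => T ∩ e = {w}) :=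
  calc G.countP (fun e => w ∈ e ∧ Disjoint U e)
      ≤ G.countP (fun e => w ∈ e ∧ Disjoint (P k) e) :=
        Multiset.countP_le_countP_of_imp fun e he => ⟨he.1, he.2.mono_left hU⟩
    _ ≤ G.countP (fun e => w ∈ e ∧ Disjoint ((P i).erase w) e) :=
        countP_mem_disjoint_le_of_maximal hP hmax hik (hT hw)
    _ ≤ G.countP (fun e => T ∩ e = {w}) := by
        refine Multiset.countP_le_countP_of_imp fun e ⟨hwe, hdisj⟩ => ?_
        refine eq_singleton_iff_unique_mem.2 ⟨mem_inter.2 ⟨hw, hwe⟩, fun v hv => ?_⟩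
        by_contra hvw
        exact disjoint_left.1 hdisj (mem_erase.2 ⟨hvw, hT (mem_inter.1 hv).1⟩) (mem_inter.1 hv).2

def shrinkParts [Fintype ι] (P S : ι → Finset V) (k : ι) : ι → Finset V :=
  fun i => if i = k then {v ∈ univ.biUnion P | ∀ j ≠ k, v ∉ S j} else S i

variable [Fintype ι] {S : ι → Finset V} {k : ι}

lemma shrinkParts_of_ne {i : ι} (hik : i ≠ k) : shrinkParts P S k i = S i := by
  simp [shrinkParts, hik]

variable (hP : ∀ v, ∃! i, v ∈ P i) (hS : ∀ i ≠ k, S i ⊆ P i)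
include hP hS

lemma subset_shrinkParts_self : P k ⊆ shrinkParts P S k k := by
  intro v hv
  simp only [shrinkParts, if_true, mem_filter, mem_biUnion, mem_univ, true_and]
  exact ⟨⟨k, hv⟩, fun j hjk hj => hjk ((hP v).unique (hS j hjk hj) hv)⟩

lemma shrinkParts_isPartition : ∀ v, ∃! i, v ∈ shrinkParts P S k i := by
  intro v
  by_cases hv : ∃ j ≠ k, v ∈ S j
  · obtain ⟨j, hjk, hj⟩ := hv
    refine ⟨j, show v ∈ shrinkParts P S k j by rwa [shrinkParts_of_ne hjk],
      fun i (hi : v ∈ shrinkParts P S k i) => ?_⟩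
    by_cases hik : i = k
    · subst hik
      simp only [shrinkParts, if_true, mem_filter] at hi
      exact absurd hj (hi.2 j hjk)
    · rw [shrinkParts_of_ne hik] at hi
      exact (hP v).unique (hS i hik hi) (hS j hjk hj)
  · push Not at hv
    refine ⟨k, ?_, fun i (hi : v ∈ shrinkParts P S k i) => ?_⟩
    · obtain ⟨j, hj, -⟩ := hP v
      simp only [shrinkParts, if_true, mem_filter, mem_biUnion, mem_univ, true_and]
      exact ⟨⟨j, hj⟩, hv⟩
    · by_contra hik
      rw [shrinkParts_of_ne hik] at hi
      exact hv i hik hi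

end Partition

section Counting

variable {G} {I : Finset ι} {W : ι → Finset V}

lemma card_le_sum_card_inter {e : Finset V} (he : e ⊆ I.biUnion W) :
    #e ≤ ∑ i ∈ I, #(W i ∩ e) := by
  calc #e = #(I.biUnion fun i => W i ∩ e) := by
        rw [← biUnion_inter, inter_eq_right.2 he]
    _ ≤ ∑ i ∈ I, #(W i ∩ e) := card_biUnion_le

lemma sum_map_sum_card_inter (F : Multiset (Finset V)) (I : Finset ι) (W : ι → Finset V) :
    (F.map fun e => ∑ i ∈ I, #(W i ∩ e)).sum = ∑ i ∈ I, ∑ w ∈ W i, F.countP (w ∈ ·) := by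
  rw [Multiset.sum_map_sum]
  refine sum_congr rfl fun i _ => ?_
  simp only [Multiset.sum_countP_eq_sum_map_card_filter, filter_mem_eq_inter]

lemma card_le_sum_countP_two_le_card_inter {F : Multiset (Finset V)}
    (hF : ∀ e ∈ F, #I < ∑ i ∈ I, #(W i ∩ e)) :
    Multiset.card F ≤ ∑ i ∈ I, F.countP (fun e => 2 ≤ #(W i ∩ e)) := by
  rw [Multiset.sum_countP_eq_sum_map_card_filter]
  calc Multiset.card F = (F.map fun _ => 1).sum := by simp
    _ ≤ _ := Multiset.sum_map_le_sum_map _ _ fun e he => card_pos.2 ?_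
  rw [card_eq_sum_ones] at hF
  obtain ⟨i, hi, hlt⟩ := exists_lt_of_sum_lt (hF e he)
  exact ⟨i, mem_filter.2 ⟨hi, hlt⟩⟩

variable [Fintype ι] [DecidableEq ι]

lemma card_le_sum_erase_card_inter {e : Finset V} (hcover : ∀ v, ∃ i, v ∈ W i) {k : ι}
    (hdisj : Disjoint (W k) e) : #e ≤ ∑ i ∈ univ.erase k, #(W i ∩ e) := by
  refine card_le_sum_card_inter fun v hv => ?_
  obtain ⟨i, hi⟩ := hcover v
  exact mem_biUnion.2
    ⟨i, mem_erase.2 ⟨fun hik => disjoint_left.1 hdisj (hik ▸ hi) hv, mem_univ i⟩, hi⟩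

theorem card_add_one_mul_countP_disjoint_le (G : Multiset (Finset V))
    (hunif : ∀ e ∈ G, #e = Fintype.card ι) (W : ι → Finset V) (hcover : ∀ v, ∃ i, v ∈ W i)
    (k : ι) (hpriv : ∀ i ≠ k, ∀ w ∈ W i,
      G.countP (fun e => w ∈ e ∧ Disjoint (W k) e) ≤ G.countP (fun e => W i ∩ e = {w})) :
    (Fintype.card ι + 1) * G.countP (Disjoint (W k)) ≤
      ∑ i ∈ univ.erase k, edgesMeeting G (W i) := by
  set F := G.filter (Disjoint (W k))
  have hcovered : ∀ e ∈ F, Fintype.card ι ≤ ∑ i ∈ univ.erase k, #(W i ∩ e) := fun e he => by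
    obtain ⟨heG, hdisj⟩ := Multiset.mem_filter.1 he
    exact hunif e heG ▸ card_le_sum_erase_card_inter hcover hdisj
  have hsingle : Fintype.card ι * Multiset.card F ≤
      ∑ i ∈ univ.erase k, G.countP (fun e => #(W i ∩ e) = 1) :=
    calc Fintype.card ι * Multiset.card F = (F.map fun _ => Fintype.card ι).sum := by
          simp [mul_comm]
      _ ≤ (F.map fun e => ∑ i ∈ univ.erase k, #(W i ∩ e)).sum :=
          Multiset.sum_map_le_sum_map _ _ hcovered
      _ = ∑ i ∈ univ.erase k, ∑ w ∈ W i, F.countP (w ∈ ·) := sum_map_sum_card_inter F _ W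
      _ ≤ ∑ i ∈ univ.erase k, ∑ w ∈ W i, G.countP (fun e => W i ∩ e = {w}) := by
          gcongr with i hi w hw
          rw [Multiset.countP_filter]
          exact hpriv i (ne_of_mem_erase hi) w hw
      _ = _ := sum_congr rfl fun i _ => sum_countP_inter_eq_singleton G (W i)
  have hdouble : Multiset.card F ≤ ∑ i ∈ univ.erase k, G.countP (fun e => 2 ≤ #(W i ∩ e)) := by
    refine (card_le_sum_countP_two_le_card_inter fun e he => ?_).trans
      (sum_le_sum fun i _ => Multiset.countP_le_of_le _ (Multiset.filter_le _ _))
    have := hcovered e he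
    have := Fintype.card_pos_iff.2 ⟨k⟩
    rw [card_erase_of_mem (mem_univ k), card_univ]
    omega
  calc (Fintype.card ι + 1) * G.countP (Disjoint (W k))
      = Fintype.card ι * Multiset.card F + Multiset.card F := by
        rw [Multiset.countP_eq_card_filter]; ring
    _ ≤ _ := add_le_add hsingle hdouble
    _ = _ := by
        rw [← sum_add_distrib]
        exact sum_congr rfl fun i _ => (edgesMeeting_eq_countP_card_inter_eq_one_add G (W i)).symm

end Counting

theorem exists_minimal_shrinking [Fintype ι] [DecidableEq ι] {P : ι → Finset V}
    (hunif : ∀ e ∈ G, #e = Fintype.card ι) (hP : ∀ v, ∃! i, v ∈ P i)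
    (hmax : ∀ Q : ι → Finset V, (∀ v, ∃! i, v ∈ Q i) →
      ∑ i, edgesMeeting G (Q i) ≤ ∑ i, edgesMeeting G (P i))
    (k : ι) (t : ℝ) (hPt : ∀ i, i ≠ k → t ≤ edgesMeeting G (P i)) :
    ∃ W : ι → Finset V, (∀ v, ∃! i, v ∈ W i) ∧ P k ⊆ W k ∧
      (∀ i ≠ k, W i ⊆ P i ∧ t ≤ edgesMeeting G (W i) ∧
        ∀ w ∈ W i, (edgesMeeting G (W i \ {w}) : ℝ) < t) ∧
      ((edgesMeeting G (W k) : ℝ) < t →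
        (Fintype.card ι + 1) * (Multiset.card G - t) <
          ∑ i ∈ univ.erase k, (edgesMeeting G (W i) : ℝ)) := by
  -- phrasing the predicate as `i ≠ k → …` lets `choose` range over all of `ι`
  choose S hSP hSt hSmin using fun i =>
    Finset.exists_subset_minimal (fun T => i ≠ k → t ≤ edgesMeeting G T) (hPt i)
  have hS : ∀ i ≠ k, S i ⊆ P i := fun i _ => hSP i
  set W := shrinkParts P S k
  have hWS : ∀ i ≠ k, W i = S i := fun i hik => shrinkParts_of_ne hik
  have hWP : ∀ i ≠ k, W i ⊆ P i := fun i hik => hWS i hik ▸ hSP i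
  refine ⟨W, shrinkParts_isPartition hP hS, subset_shrinkParts_self hP hS, fun i hik => ?_,
    fun hWk => ?_⟩
  · rw [hWS i hik]
    exact ⟨hSP i, hSt i hik, fun w hw => by simpa [hik] using hSmin i w hw⟩
  have hcount := card_add_one_mul_countP_disjoint_le G hunif W
    (fun v => (shrinkParts_isPartition hP hS v).exists) k fun i hik w hw =>
      countP_mem_disjoint_le_countP_inter_eq_singleton hP hmax hik (hWP i hik)
        (subset_shrinkParts_self hP hS) hw
  have hmiss : (Multiset.card G : ℝ) - t < G.countP (Disjoint (W k)) := by
    have : (G.countP (Disjoint (W k)) : ℝ) + edgesMeeting G (W k) = Multiset.card G := by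
      exact_mod_cast countP_disjoint_add_edgesMeeting G (W k)
    linarith
  calc _ < (Fintype.card ι + 1) * (G.countP (Disjoint (W k)) : ℝ) :=
        mul_lt_mul_of_pos_left hmiss (by positivity)
    _ ≤ _ := by exact_mod_cast hcount

end

/-- Let `V₁, …, V_r` (here `P 0, …, P (r-1)`) be a partition of the vertex set of an
`r`-uniform multi-hypergraph maximising `∑ i, d(Vᵢ)`, ordered with `d(V₁) ≥ ⋯ ≥ d(V_r)`,
and suppose `d(V_{r-1}) ≥ c m`.  Then either there is a partition `W₁, …, W_r` with
`Wᵢ ⊆ Vᵢ` for `i ≤ r-1` (and so `W_r ⊇ V_r`) in which every part meets at least `c m`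
edges, or there is such a partition in which, for each `i ≠ r`, `Wᵢ` is a minimal set
meeting at least `c m` edges, and `∑_{i<r} d(Wᵢ) > (r+1)(m - c m)`. -/
theorem statement6 {V : Type*} [DecidableEq V] (r : ℕ) (hr : 2 ≤ r)
    (G : Multiset (Finset V)) (hunif : ∀ e ∈ G, e.card = r)
    (m : ℕ) (hm : Multiset.card G = m)
    (c : ℝ)
    (P : Fin r → Finset V) (hpart : ∀ v : V, ∃! i, v ∈ P i)
    (hmax : ∀ Q : Fin r → Finset V, (∀ v : V, ∃! i, v ∈ Q i) →
      ∑ i : Fin r, edgesMeeting G (Q i) ≤ ∑ i : Fin r, edgesMeeting G (P i))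
    (horder : ∀ i j : Fin r, i ≤ j → edgesMeeting G (P j) ≤ edgesMeeting G (P i))
    (hVr1 : c * m ≤ (edgesMeeting G (P ⟨r - 2, by omega⟩) : ℝ)) :
    (∃ W : Fin r → Finset V, (∀ v : V, ∃! i, v ∈ W i) ∧
      (∀ i : Fin r, (i : ℕ) < r - 1 → W i ⊆ P i) ∧
      P ⟨r - 1, by omega⟩ ⊆ W ⟨r - 1, by omega⟩ ∧
      ∀ i : Fin r, c * m ≤ (edgesMeeting G (W i) : ℝ)) ∨
    (∃ W : Fin r → Finset V, (∀ v : V, ∃! i, v ∈ W i) ∧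
      (∀ i : Fin r, (i : ℕ) < r - 1 → W i ⊆ P i) ∧
      (∀ i : Fin r, (i : ℕ) < r - 1 →
        c * m ≤ (edgesMeeting G (W i) : ℝ) ∧
        ∀ w ∈ W i, (edgesMeeting G (W i \ {w}) : ℝ) < c * m) ∧
      ((r : ℝ) + 1) * (m - c * m) <
        ∑ i ∈ Finset.univ.filter (fun i : Fin r => (i : ℕ) < r - 1),
          (edgesMeeting G (W i) : ℝ)) := by
  subst hm
  set last : Fin r := ⟨r - 1, by omega⟩
  have hlt_iff : ∀ i : Fin r, (i : ℕ) < r - 1 ↔ i ≠ last := fun i => by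
    simp only [ne_eq, Fin.ext_iff, last]; omega
  have hPge : ∀ i, i ≠ last → c * Multiset.card G ≤ edgesMeeting G (P i) := fun i hi =>
    hVr1.trans <| by
      have := (hlt_iff i).2 hi
      exact_mod_cast horder _ _ (Fin.le_def.2 (by simp only; omega))
  obtain ⟨W, hWpart, hPW, hWmin, hsum⟩ :=
    exists_minimal_shrinking G (by simpa only [Fintype.card_fin]) hpart hmax last _ hPge
  have hWP : ∀ i : Fin r, (i : ℕ) < r - 1 → W i ⊆ P i := fun i hi => (hWmin i ((hlt_iff i).1 hi)).1
  by_cases hWlast : c * Multiset.card G ≤ edgesMeeting G (W last)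
  · refine Or.inl ⟨W, hWpart, hWP, hPW, fun i => ?_⟩
    by_cases hi : i = last
    · rwa [hi]
    · exact (hWmin i hi).2.1
  · refine Or.inr ⟨W, hWpart, hWP, fun i hi => (hWmin i ((hlt_iff i).1 hi)).2, ?_⟩
    have hfilter : univ.filter (fun i : Fin r => (i : ℕ) < r - 1) = univ.erase last := by
      ext i; simp [hlt_iff]
    simpa [hfilter] using hsum (not_le.1 hWlast)
end

section
/- Let G be an r-uniform multi-hypergraph on vertex set V with m edges, let V₁, V₂, …, V_r be a partition of V for which Σᵢ d(Vᵢ) cannot be increased by moving any single vertex into V_r, and let U₁, U₂, …, U_r be another partition of V with Uᵢ ⊆ Vᵢ for each i < r (so U_r ⊇ V_r). Then Σᵢ d(Uᵢ) cannot be increased by moving any single vertex from some Uᵢ (i < r) into U_r; that is, for every i < r and every v ∈ Uᵢ, d(Uᵢ \ {v}) + d(U_r ∪ {v}) ≤ d(Uᵢ) + d(U_r). -/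
def edgesThroughAvoiding {V : Type*} [DecidableEq V] (G : Multiset (Finset V)) (A : Finset V)
    (v : V) : ℕ :=
  Multiset.card (G.filter fun e => v ∈ e ∧ ¬(A ∩ e).Nonempty)

section EdgesMeeting

variable {V : Type*} [DecidableEq V] (G : Multiset (Finset V))

lemma edgesMeeting_union_singleton (A : Finset V) (v : V) :
    edgesMeeting G (A ∪ {v}) = edgesMeeting G A + edgesThroughAvoiding G A v := by
  have hmeet : ∀ e : Finset V, ((A ∪ {v}) ∩ e).Nonempty ↔
      (A ∩ e).Nonempty ∨ (v ∈ e ∧ ¬(A ∩ e).Nonempty) := by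
    intro e
    rw [Finset.union_inter_distrib_right, Finset.union_nonempty]
    by_cases hv : v ∈ e
    · simpa [hv] using (A ∩ e).eq_empty_or_nonempty.symm
    · simp [hv]
  have hsplit := Multiset.filter_add_filter (fun e : Finset V => (A ∩ e).Nonempty)
    (fun e => v ∈ e ∧ ¬(A ∩ e).Nonempty) G
  have hdisjoint : G.filter (fun e => (A ∩ e).Nonempty ∧ (v ∈ e ∧ ¬(A ∩ e).Nonempty)) = 0 :=
    Multiset.filter_eq_nil.mpr fun _ _ h => h.2.2 h.1
  simp only [edgesMeeting, edgesThroughAvoiding, hmeet]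
  rw [← Multiset.card_add, hsplit, hdisjoint, add_zero]

lemma edgesMeeting_eq_sdiff_singleton_add {A : Finset V} {v : V} (hv : v ∈ A) :
    edgesMeeting G A = edgesMeeting G (A \ {v}) + edgesThroughAvoiding G (A \ {v}) v := by
  rw [← edgesMeeting_union_singleton, Finset.sdiff_union_of_subset (by simpa using hv)]

lemma edgesThroughAvoiding_anti {A B : Finset V} (h : A ⊆ B) (v : V) :
    edgesThroughAvoiding G B v ≤ edgesThroughAvoiding G A v :=
  Multiset.card_le_card <| Multiset.monotone_filter_right _ fun _ he =>
    ⟨he.1, fun hA => he.2 (hA.mono (Finset.inter_subset_inter h le_rfl))⟩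

lemma edgesMeeting_move_le_iff {A : Finset V} {v : V} (hv : v ∈ A) (B : Finset V) :
    edgesMeeting G (A \ {v}) + edgesMeeting G (B ∪ {v}) ≤ edgesMeeting G A + edgesMeeting G B ↔
      edgesThroughAvoiding G B v ≤ edgesThroughAvoiding G (A \ {v}) v := by
  rw [edgesMeeting_union_singleton, edgesMeeting_eq_sdiff_singleton_add G hv]
  omega

end EdgesMeeting

lemma subset_of_forall_ne_subset {V ι : Type*} {P U : ι → Finset V}
    (hP : ∀ v, ∃! i, v ∈ P i) (hU : ∀ v, ∃ i, v ∈ U i) {l : ι}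
    (hsub : ∀ j, j ≠ l → U j ⊆ P j) : P l ⊆ U l := by
  intro w hw
  obtain ⟨j, hj⟩ := hU w
  obtain rfl : j = l := by
    by_contra hjl
    exact hjl ((hP w).unique (hsub j hjl hj) hw)
  exact hj

/-- If `V₁, …, V_r` is a partition of the vertex set of an `r`-uniform multi-hypergraph
such that `∑ i, d(Vᵢ)` cannot be increased by moving a single vertex into the last part `V_r`,
and `U₁, …, U_r` is another partition with `Uᵢ ⊆ Vᵢ` for all `i < r` (so `U_r ⊇ V_r`),
then `∑ i, d(Uᵢ)` also cannot be increased by moving a single vertex into `U_r`: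
for every `i < r` and `v ∈ Uᵢ`, `d(Uᵢ \ {v}) + d(U_r ∪ {v}) ≤ d(Uᵢ) + d(U_r)`. -/
theorem statement7 {V : Type*} [DecidableEq V] (r : ℕ) (hr : 0 < r)
    (G : Multiset (Finset V))
    (P : Fin r → Finset V) (hpart : ∀ v : V, ∃! i, v ∈ P i)
    (hlocal : ∀ i : Fin r, i ≠ ⟨r - 1, by omega⟩ → ∀ v ∈ P i,
      edgesMeeting G (P i \ {v}) + edgesMeeting G (P ⟨r - 1, by omega⟩ ∪ {v}) ≤
        edgesMeeting G (P i) + edgesMeeting G (P ⟨r - 1, by omega⟩))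
    (U : Fin r → Finset V) (hUpart : ∀ v : V, ∃! i, v ∈ U i)
    (hsub : ∀ i : Fin r, (i : ℕ) < r - 1 → U i ⊆ P i) :
    ∀ i : Fin r, i ≠ ⟨r - 1, by omega⟩ → ∀ v ∈ U i,
      edgesMeeting G (U i \ {v}) + edgesMeeting G (U ⟨r - 1, by omega⟩ ∪ {v}) ≤
        edgesMeeting G (U i) + edgesMeeting G (U ⟨r - 1, by omega⟩) := by
  set l : Fin r := ⟨r - 1, by omega⟩
  have hsub_ne : ∀ j, j ≠ l → U j ⊆ P j := fun j hj =>
    hsub j (by have := j.isLt; have : (j : ℕ) ≠ r - 1 := fun h => hj (Fin.ext h); omega)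
  intro i hi v hv
  have hvP : v ∈ P i := hsub_ne i hi hv
  have hPU : P l ⊆ U l := subset_of_forall_ne_subset hpart (fun w => (hUpart w).exists) hsub_ne
  have hgainP := (edgesMeeting_move_le_iff G hvP _).mp (hlocal i hi v hvP)
  refine (edgesMeeting_move_le_iff G hv _).mpr ?_
  calc edgesThroughAvoiding G (U l) v
      ≤ edgesThroughAvoiding G (P l) v := edgesThroughAvoiding_anti G hPU v
    _ ≤ edgesThroughAvoiding G (P i \ {v}) v := hgainP
    _ ≤ edgesThroughAvoiding G (U i \ {v}) v :=
        edgesThroughAvoiding_anti G (Finset.sdiff_subset_sdiff (hsub_ne i hi) le_rfl) v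
end

section
/- Let G be an r-uniform multi-hypergraph on vertex set V with m edges and let V₁, V₂, …, V_r be any partition of V into r parts. Then Σ_{i=1}^{r−1} |{e : |e ∩ Vᵢ| = 1}| ≤ Σ_{i=1}^{r} d(Vᵢ) − m, where edges are counted with multiplicity. -/
/-- The number of edges of `G` (counted with multiplicity) that meet `A` in exactly
one vertex. -/
def edgesMeetingOnce {V : Type*} [DecidableEq V] (G : Multiset (Finset V)) (A : Finset V) : ℕ :=
  Multiset.card (G.filter fun e => (A ∩ e).card = 1)

open Finset

namespace Multiset

variable {ι α : Type*}

theorem sum_card_filter_eq_sum_map_card_filter (I : Finset ι) (G : Multiset α)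
    (p : ι → α → Prop) [∀ i, DecidablePred (p i)] :
    ∑ i ∈ I, card (G.filter (p i)) = (G.map fun e => #{i ∈ I | p i e}).sum := by
  induction G using Multiset.induction with
  | empty => simp
  | cons a G ih =>
    simp only [filter_cons, card_add, sum_add_distrib, ih, map_cons, sum_cons]
    rw [Finset.card_filter]
    congr 1
    exact sum_congr rfl fun i _ => by split_ifs <;> simp

theorem sum_map_add_card_le_of_lt (G : Multiset α) {f g : α → ℕ} (h : ∀ e ∈ G, f e < g e) :
    (G.map f).sum + card G ≤ (G.map g).sum := by
  have hcard : card G = (G.map fun _ => 1).sum := by simp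
  rw [hcard, ← sum_map_add]
  exact sum_map_le_sum_map _ _ h

end Multiset

section Partition

variable {ι V : Type*} [Fintype ι] [DecidableEq V] {P : ι → Finset V}

theorem sum_card_inter_of_existsUnique_mem (hP : ∀ v, ∃! i, v ∈ P i) (e : Finset V) :
    ∑ i, #(P i ∩ e) = #e := by
  have hcover : univ.biUnion (fun i => P i ∩ e) = e := by
    ext v
    simp only [mem_biUnion, mem_univ, mem_inter, true_and]
    exact ⟨fun ⟨_, _, hv⟩ => hv, fun hv => (hP v).exists.imp fun _ hi => ⟨hi, hv⟩⟩
  have hdisj : ((univ : Finset ι) : Set ι).PairwiseDisjoint (fun i => P i ∩ e) := by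
    intro i _ j _ hij
    refine disjoint_left.mpr fun v hvi hvj => hij ?_
    exact (hP v).unique (mem_inter.mp hvi).1 (mem_inter.mp hvj).1
  rw [← card_biUnion (by simpa using hdisj), hcover]

theorem card_filter_card_inter_eq_one_lt_card_filter_nonempty (hP : ∀ v, ∃! i, v ∈ P i)
    {e : Finset V} (he : Fintype.card ι ≤ #e) {I : Finset ι} {j : ι} (hj : j ∉ I) :
    #{i ∈ I | #(P i ∩ e) = 1} < #{i | (P i ∩ e).Nonempty} := by
  set T : Finset ι := {i ∈ I | #(P i ∩ e) = 1}
  set S : Finset ι := {i | (P i ∩ e).Nonempty}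
  have hTS : T ⊆ S := fun i hi => by
    simp only [T, mem_filter] at hi
    simp only [S, mem_filter, mem_univ, true_and, ← card_pos, hi.2, zero_lt_one]
  refine card_lt_card (Finset.ssubset_iff_subset_ne.mpr ⟨hTS, fun hTeqS => ?_⟩)
  have hjS : j ∉ S := fun hjS => hj (mem_filter.mp (hTeqS ▸ hjS : j ∈ T)).1
  have hsum : #e = #S := calc
    #e = ∑ i, #(P i ∩ e) := (sum_card_inter_of_existsUnique_mem hP e).symm
    _ = ∑ i ∈ S, #(P i ∩ e) :=
      (sum_filter_of_ne fun i _ h => card_pos.mp (Nat.pos_of_ne_zero h)).symm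
    _ = ∑ i ∈ S, 1 := sum_congr rfl fun i hi => (mem_filter.mp (hTeqS ▸ hi : i ∈ T)).2
    _ = #S := (card_eq_sum_ones S).symm
  exact absurd (card_lt_univ_of_notMem hjS) (by omega)

end Partition

theorem statement15_general {V : Type*} [DecidableEq V] (r : ℕ) (hr : 0 < r)
    (G : Multiset (Finset V)) (hunif : ∀ e ∈ G, e.card = r)
    (m : ℕ) (hm : Multiset.card G = m)
    (P : Fin r → Finset V) (hpart : ∀ v : V, ∃! i, v ∈ P i) :
    ∑ i ∈ Finset.univ.filter (fun i : Fin r => (i : ℕ) < r - 1),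
        (edgesMeetingOnce G (P i) : ℝ) ≤
      (∑ i : Fin r, (edgesMeeting G (P i) : ℝ)) - m := by
  set I := univ.filter fun i : Fin r => (i : ℕ) < r - 1
  have hedge (e) (he : e ∈ G) : #{i ∈ I | #(P i ∩ e) = 1} < #{i | (P i ∩ e).Nonempty} :=
    card_filter_card_inter_eq_one_lt_card_filter_nonempty hpart (by simp [hunif e he])
      (j := ⟨r - 1, by omega⟩) (by simp [I])
  have hnat := G.sum_map_add_card_le_of_lt hedge
  rw [← Multiset.sum_card_filter_eq_sum_map_card_filter,
    ← Multiset.sum_card_filter_eq_sum_map_card_filter, hm] at hnat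
  have hreal : ((∑ i ∈ I, edgesMeetingOnce G (P i) : ℕ) : ℝ) + m ≤
      (∑ i, edgesMeeting G (P i) : ℕ) := by
    exact_mod_cast hnat
  push_cast at hreal
  linarith

/-- If `V₁, …, V_r` is any partition of the vertex set of an `r`-uniform multi-hypergraph,
then `∑_{i=1}^{r-1} |{e : |e ∩ Vᵢ| = 1}| ≤ ∑_{i=1}^{r} d(Vᵢ) - m`. -/
theorem statement15 {V : Type*} [Fintype V] [DecidableEq V] (r : ℕ) (hr : 0 < r)
    (G : Multiset (Finset V)) (hunif : ∀ e ∈ G, e.card = r)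
    (m : ℕ) (hm : Multiset.card G = m)
    (P : Fin r → Finset V) (hpart : ∀ v : V, ∃! i, v ∈ P i) :
    ∑ i ∈ Finset.univ.filter (fun i : Fin r => (i : ℕ) < r - 1),
        (edgesMeetingOnce G (P i) : ℝ) ≤
      (∑ i : Fin r, (edgesMeeting G (P i) : ℝ)) - m :=
  statement15_general r hr G hunif m hm P hpart
end
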